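/- arXiv:2603.06027 — 3 statements merged into one kernel-verified Lean document; each statement's English description precedes it below -/
import Mathlib

section
/- For every odd k ∈ ℕ, the k-th Hermite coefficient of the sign function satisfies ⟨sign, H_k⟩_γ = ∫_ℝ sign(y) H_k(y) dγ(y) = √(2/(kπ)) · H_{k−1}(0). -/
open MeasureTheory ProbabilityTheory Real

/-- The `k`-th normalized Hermite polynomial (as a function on `ℝ`): the monic
probabilist's Hermite polynomial divided by `√(k!)`. -/
noncomputable def normHermite (k : ℕ) (x : ℝ) : ℝ :=
  Polynomial.aeval x (Polynomial.hermite k) / Real.sqrt (Nat.factorial k)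

/-- The sign function: `1` if `x ≥ 0`, `-1` otherwise. -/
noncomputable def signFn (x : ℝ) : ℝ := if 0 ≤ x then 1 else -1

/-! For odd `k` the function `Hₖ · φ` (with `φ` the Gaussian density) is odd, so
`sign · Hₖ · φ = (Hₖ φ)(|y|)` and the integral is twice the integral over `(0, ∞)`. There the
recursion `Heₖ(x) e^{-x²/2} = -(d/dx)(Heₖ₋₁(x) e^{-x²/2})` reduces it to the boundary value
`Heₖ₋₁(0)`; the normalizations `√(k!)` and `√(2π)` combine into `√(2/(kπ))`. -/

open Polynomial Filter Set Topology

namespace Polynomial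

theorem aeval_neg_hermite {A : Type*} [CommRing A] (n : ℕ) (x : A) :
    aeval (-x) (hermite n) = (-1) ^ n * aeval x (hermite n) := by
  simp only [aeval_eq_sum_range, Finset.mul_sum, zsmul_eq_mul, neg_pow x]
  refine Finset.sum_congr rfl fun i _ => ?_
  rcases Nat.even_or_odd (n + i) with h | h
  · rw [neg_one_pow_eq_pow_mod_two i, neg_one_pow_eq_pow_mod_two n,
      show i % 2 = n % 2 by rcases h with ⟨j, hj⟩; omega]
    ring
  · simp [coeff_hermite_of_odd_add h]

variable {R : Type*} [CommSemiring R] [Algebra R ℝ]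

theorem integrable_aeval_mul_exp_neg_sq_div_two (p : R[X]) :
    Integrable fun x : ℝ => aeval x p * exp (-(x ^ 2 / 2)) := by
  induction p using Polynomial.induction_on' with
  | add p q hp hq => simp only [map_add, add_mul]; exact hp.add hq
  | monomial n a =>
    have h := integrable_rpow_mul_exp_neg_mul_sq (b := 1 / 2) (s := n) (by norm_num)
      (by linarith [n.cast_nonneg (α := ℝ)])
    simp only [aeval_monomial, mul_assoc]
    refine (h.congr (ae_of_all _ fun x => ?_)).const_mul _
    simp only [rpow_natCast]; ring_nf

theorem tendsto_aeval_mul_exp_neg_sq_div_two_atTop (p : R[X]) :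
    Tendsto (fun x : ℝ => aeval x p * exp (-(x ^ 2 / 2))) atTop (𝓝 0) := by
  induction p using Polynomial.induction_on' with
  | add p q hp hq => simpa only [map_add, add_mul, add_zero] using hp.add hq
  | monomial n a =>
    have h := (rpow_mul_exp_neg_mul_sq_isLittleO_exp_neg (b := 1 / 2) (by norm_num) n)
      |>.tendsto_zero_of_tendsto
        (tendsto_exp_atBot.comp (tendsto_id.const_mul_atTop_of_neg (by norm_num)))
    simp only [aeval_monomial, mul_assoc]
    simpa [rpow_natCast, neg_div, div_eq_inv_mul] using h.const_mul (algebraMap R ℝ a)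

theorem hasDerivAt_aeval_hermite_mul_exp_neg_sq_div_two (n : ℕ) (x : ℝ) :
    HasDerivAt (fun x : ℝ => aeval x (hermite n) * exp (-(x ^ 2 / 2)))
      (-(aeval x (hermite (n + 1)) * exp (-(x ^ 2 / 2)))) x := by
  have hexp : HasDerivAt (fun x : ℝ => exp (-(x ^ 2 / 2))) (-x * exp (-(x ^ 2 / 2))) x := by
    convert (((hasDerivAt_pow 2 x).div_const 2).fun_neg).exp using 1
    push_cast; ring
  refine (((hermite n).hasDerivAt_aeval x).mul hexp).congr_deriv ?_
  rw [hermite_succ, map_sub, map_mul, aeval_X]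
  ring

theorem integral_Ioi_aeval_hermite_succ_mul_exp_neg_sq_div_two (n : ℕ) :
    ∫ x in Ioi 0, aeval x (hermite (n + 1)) * exp (-(x ^ 2 / 2))
      = aeval (0 : ℝ) (hermite n) := by
  have hderiv (x : ℝ) : HasDerivAt (fun x : ℝ => -(aeval x (hermite n) * exp (-(x ^ 2 / 2))))
      (aeval x (hermite (n + 1)) * exp (-(x ^ 2 / 2))) x := by
    simpa only [neg_neg] using (hasDerivAt_aeval_hermite_mul_exp_neg_sq_div_two n x).fun_neg
  rw [integral_Ioi_of_hasDerivAt_of_tendsto' (fun x _ => hderiv x)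
    (integrable_aeval_mul_exp_neg_sq_div_two _).integrableOn
    (by simpa using (tendsto_aeval_mul_exp_neg_sq_div_two_atTop (hermite n)).neg)]
  simp

end Polynomial

theorem signFn_mul_eq_comp_abs {f : ℝ → ℝ} (hf : ∀ x, f (-x) = -f x) (x : ℝ) :
    signFn x * f x = f |x| := by
  rcases le_or_gt 0 x with hx | hx
  · simp [signFn, hx, abs_of_nonneg hx]
  · simp [signFn, hx.not_ge, abs_of_neg hx, hf]

theorem normHermite_neg_of_odd {k : ℕ} (hk : Odd k) (x : ℝ) :
    normHermite k (-x) = -normHermite k x := by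
  simp [normHermite, aeval_neg_hermite, hk.neg_one_pow, neg_div]

theorem integral_Ioi_normHermite_succ_mul_gaussianPDFReal (n : ℕ) :
    ∫ x in Ioi 0, normHermite (n + 1) x * gaussianPDFReal 0 1 x
      = normHermite n 0 / √(2 * π * (n + 1)) := by
  have hpt (x : ℝ) : normHermite (n + 1) x * gaussianPDFReal 0 1 x
      = aeval x (hermite (n + 1)) * exp (-(x ^ 2 / 2)) / (√(2 * π) * √((n + 1).factorial)) := by
    simp only [normHermite, gaussianPDFReal, NNReal.coe_one, mul_one, sub_zero, neg_div]
    ring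
  simp_rw [hpt, integral_div, integral_Ioi_aeval_hermite_succ_mul_exp_neg_sq_div_two, normHermite,
    Nat.factorial_succ]
  push_cast
  rw [sqrt_mul (by positivity) ((n : ℝ) + 1), sqrt_mul (by positivity : (0 : ℝ) ≤ n + 1)]
  field_simp

theorem stmt_7 (k : ℕ) (hk : Odd k) :
    ∫ y, signFn y * normHermite k y ∂(gaussianReal 0 1)
      = Real.sqrt (2 / (k * π)) * normHermite (k - 1) 0 := by
  obtain ⟨n, rfl⟩ : ∃ n, k = n + 1 := Nat.exists_eq_add_one.mpr hk.pos
  set f : ℝ → ℝ := fun y => normHermite (n + 1) y * gaussianPDFReal 0 1 y with hf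
  have hodd (x : ℝ) : f (-x) = -f x := by
    simp [hf, normHermite_neg_of_odd hk, gaussianPDFReal]
  calc ∫ y, signFn y * normHermite (n + 1) y ∂(gaussianReal 0 1)
      = ∫ y, signFn y * f y := by
        rw [integral_gaussianReal_eq_integral_smul one_ne_zero]
        congr with y
        simp only [hf, smul_eq_mul]
        ring
    _ = ∫ y, f |y| := by simp_rw [signFn_mul_eq_comp_abs hodd]
    _ = 2 * (normHermite n 0 / √(2 * π * (n + 1))) := by
        rw [integral_comp_abs, hf, integral_Ioi_normHermite_succ_mul_gaussianPDFReal]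
    _ = √(2 / ((n + 1 : ℕ) * π)) * normHermite (n + 1 - 1) 0 := by
        have hc : √(2 / ((n + 1) * π)) * √(2 * π * (n + 1)) = 2 := by
          rw [← sqrt_mul (by positivity),
            show 2 / ((n + 1) * π) * (2 * π * (n + 1)) = (2 : ℝ) ^ 2 by field_simp,
            sqrt_sq zero_le_two]
        rw [Nat.add_sub_cancel, Nat.cast_add_one, mul_div_assoc', div_eq_iff (by positivity),
          mul_right_comm, hc, mul_comm]
end

section
/- There exists a constant C > 0 such that for every integer d ≥ 2, with τ = √(100·log d), ∫_0^∞ |1 − (2/π)·∫_0^{min(τ,x)} sin(t√d)/t dt| · φ(x) dx ≤ C · (log d)/√d. -/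
open MeasureTheory ProbabilityTheory Real

/-- The standard Gaussian density on `ℝ`. -/
noncomputable def gaussDensity (x : ℝ) : ℝ := Real.exp (-x ^ 2 / 2) / Real.sqrt (2 * π)

/-!
Write `Si M = ∫₀^M sin u / u du`, so that the integrand is `|1 - (2/π) Si (c · min τ x)| φ(x)` with
`c = √d`. Replacing `1/u` by `∫₀^∞ e^{-ut} dt` and exchanging the integrals gives
`Si M = π/2 - ∫₀^∞ e^{-Mt} (cos M + t sin M) / (1 + t²) dt`, whence `|1 - (2/π) Si M| ≤ 2/M`;
for small `M` one uses `|Si M| ≤ M` instead. Splitting `(0, ∞)` at `1/c` and `τ`, the three pieces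
contribute at most `1/c` (as `φ ≤ 1/2`), `∫_{1/c}^τ dx/(cx) = log(τc)/c` and `2/(τc)`; for
`τ = √(100 log d)` each of these is `O(log d / √d)`.
-/

open Set

noncomputable def sineIntegral (M : ℝ) : ℝ := ∫ u in (0 : ℝ)..M, sin u / u

lemma abs_sin_div_self_le_one (u : ℝ) : |sin u / u| ≤ 1 := by
  rcases eq_or_ne u 0 with rfl | hu
  · simp
  · simpa [sinc_of_ne_zero hu] using abs_sinc_le_one u

lemma intervalIntegrable_sin_div_self (a b : ℝ) :
    IntervalIntegrable (fun u => sin u / u) volume a b := by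
  refine (intervalIntegrable_const (c := (1 : ℝ))).mono_fun'
    (measurable_sin.div measurable_id).aestronglyMeasurable (ae_of_all _ fun u => ?_)
  exact (norm_eq_abs _).trans_le (abs_sin_div_self_le_one u)

lemma continuous_sineIntegral : Continuous sineIntegral :=
  intervalIntegral.continuous_primitive intervalIntegrable_sin_div_self 0

lemma integral_sin_mul_div_self {c : ℝ} (hc : c ≠ 0) (m : ℝ) :
    ∫ t in (0 : ℝ)..m, sin (t * c) / t = sineIntegral (m * c) := by
  have h : ∀ t : ℝ, sin (t * c) / t = sin (t * c) / (t * c) * c := fun t => by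
    rcases eq_or_ne t 0 with rfl | ht
    · simp
    · field_simp
  simp_rw [h, intervalIntegral.integral_mul_const,
    intervalIntegral.integral_comp_mul_right (fun u => sin u / u) hc, zero_mul, smul_eq_mul,
    sineIntegral]
  field_simp

lemma abs_sineIntegral_le {M : ℝ} (hM : 0 ≤ M) : |sineIntegral M| ≤ M := by
  simpa [sineIntegral, abs_of_nonneg hM] using
    intervalIntegral.norm_integral_le_of_norm_le_const (a := 0) (b := M) (C := 1)
      (f := fun u => sin u / u)
      fun u _ => (norm_eq_abs _).trans_le (abs_sin_div_self_le_one u)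

lemma integral_Ioi_exp_neg_mul {u : ℝ} (hu : 0 < u) : ∫ t in Ioi 0, exp (-u * t) = 1 / u := by
  rw [integral_exp_mul_Ioi (neg_lt_zero.2 hu)]
  simp [neg_div]

lemma integral_exp_neg_mul_mul_sin (t M : ℝ) :
    ∫ u in (0 : ℝ)..M, exp (-u * t) * sin u
      = (1 - exp (-M * t) * (cos M + t * sin M)) / (1 + t ^ 2) := by
  have hderiv : ∀ u : ℝ, HasDerivAt (fun u => -(exp (-u * t) * (cos u + t * sin u)) / (1 + t ^ 2))
      (exp (-u * t) * sin u) u := fun u => by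
    have he : HasDerivAt (fun u => exp (-u * t)) (exp (-u * t) * (-t)) u := by
      simpa using ((hasDerivAt_id u).neg.mul_const t).exp
    have hcs : HasDerivAt (fun u => cos u + t * sin u) (-sin u + t * cos u) u :=
      (hasDerivAt_cos u).add ((hasDerivAt_sin u).const_mul t)
    refine ((he.mul hcs).neg.div_const (1 + t ^ 2)).congr_deriv ?_
    field_simp
    ring
  have hcont : Continuous fun u => exp (-u * t) * sin u := by fun_prop
  rw [intervalIntegral.integral_eq_sub_of_hasDerivAt (fun u _ => hderiv u)
    (hcont.intervalIntegrable _ _)]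
  simp only [neg_zero, zero_mul, exp_zero, cos_zero, sin_zero]
  ring

lemma abs_exp_neg_mul_mul_cos_add_mul_sin_div_le (M : ℝ) {t : ℝ} (ht : 0 ≤ t) :
    |exp (-M * t) * (cos M + t * sin M) / (1 + t ^ 2)| ≤ 2 * exp (-M * t) := by
  have hcs : |cos M + t * sin M| ≤ 1 + t := by
    calc |cos M + t * sin M| ≤ |cos M| + t * |sin M| := by
          simpa [abs_mul, abs_of_nonneg ht] using abs_add_le (cos M) (t * sin M)
      _ ≤ 1 + t := add_le_add (abs_cos_le_one M) (mul_le_of_le_one_right ht (abs_sin_le_one M))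
  have hpos : (0 : ℝ) < 1 + t ^ 2 := by positivity
  rw [abs_div, abs_mul, abs_exp, abs_of_pos hpos, div_le_iff₀ hpos]
  calc exp (-M * t) * |cos M + t * sin M| ≤ exp (-M * t) * (1 + t) := by gcongr
    _ ≤ exp (-M * t) * (2 * (1 + t ^ 2)) := by gcongr; nlinarith [sq_nonneg (t - 1 / 2)]
    _ = 2 * exp (-M * t) * (1 + t ^ 2) := by ring

lemma integrable_exp_neg_mul_mul_sin (M : ℝ) :
    Integrable (fun p : ℝ × ℝ => exp (-p.1 * p.2) * sin p.1)
      ((volume.restrict (Ioc 0 M)).prod (volume.restrict (Ioi 0))) := by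
  have hmeas : AEStronglyMeasurable (fun p : ℝ × ℝ => exp (-p.1 * p.2) * sin p.1)
      ((volume.restrict (Ioc 0 M)).prod (volume.restrict (Ioi 0))) :=
    Continuous.aestronglyMeasurable (by fun_prop)
  rw [integrable_prod_iff hmeas]
  refine ⟨ae_restrict_of_forall_mem measurableSet_Ioc fun u hu => ?_, ?_⟩
  · exact (integrableOn_exp_mul_Ioi (neg_lt_zero.2 hu.1) 0).mul_const (sin u)
  · refine (integrableOn_const (C := (1 : ℝ)) measure_Ioc_lt_top.ne).mono'
      hmeas.norm.integral_prod_right' (ae_restrict_of_forall_mem measurableSet_Ioc fun u hu => ?_)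
    simp only [norm_mul, norm_eq_abs, abs_exp, integral_mul_const,
      integral_Ioi_exp_neg_mul hu.1]
    rw [abs_of_pos (one_div_pos.2 hu.1), one_div_mul_eq_div, div_le_one hu.1]
    exact (abs_abs _).trans_le <| abs_sin_le_abs.trans_eq (abs_of_pos hu.1)

lemma sineIntegral_eq_pi_div_two_sub {M : ℝ} (hM : 0 < M) :
    sineIntegral M
      = π / 2 - ∫ t in Ioi 0, exp (-M * t) * (cos M + t * sin M) / (1 + t ^ 2) := by
  have hR : IntegrableOn (fun t => exp (-M * t) * (cos M + t * sin M) / (1 + t ^ 2)) (Ioi 0) :=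
    ((integrableOn_exp_mul_Ioi (neg_lt_zero.2 hM) 0).const_mul 2).mono'
      (Continuous.div (by fun_prop) (by fun_prop) fun t => by positivity).aestronglyMeasurable
      (ae_restrict_of_forall_mem measurableSet_Ioi fun t ht =>
        (norm_eq_abs _).trans_le (abs_exp_neg_mul_mul_cos_add_mul_sin_div_le M ht.le))
  calc sineIntegral M = ∫ u in Ioc 0 M, ∫ t in Ioi 0, exp (-u * t) * sin u := by
        rw [sineIntegral, intervalIntegral.integral_of_le hM.le]
        refine setIntegral_congr_fun measurableSet_Ioc fun u hu => ?_
        rw [integral_mul_const, integral_Ioi_exp_neg_mul hu.1, one_div_mul_eq_div]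
    _ = ∫ t in Ioi 0, ∫ u in Ioc 0 M, exp (-u * t) * sin u :=
        integral_integral_swap (integrable_exp_neg_mul_mul_sin M)
    _ = ∫ t in Ioi 0, ((1 + t ^ 2)⁻¹ - exp (-M * t) * (cos M + t * sin M) / (1 + t ^ 2)) := by
        congr 1 with t
        rw [← intervalIntegral.integral_of_le hM.le, integral_exp_neg_mul_mul_sin, sub_div, one_div]
    _ = _ := by
        rw [integral_sub integrable_inv_one_add_sq.integrableOn hR, integral_Ioi_inv_one_add_sq,
          arctan_zero, sub_zero]

lemma abs_pi_div_two_sub_sineIntegral_le {M : ℝ} (hM : 0 < M) :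
    |π / 2 - sineIntegral M| ≤ 2 / M := by
  rw [sineIntegral_eq_pi_div_two_sub hM, sub_sub_cancel, ← norm_eq_abs]
  calc _ ≤ ∫ t in Ioi 0, 2 * exp (-M * t) :=
        norm_integral_le_of_norm_le ((integrableOn_exp_mul_Ioi (neg_lt_zero.2 hM) 0).const_mul 2)
          (ae_restrict_of_forall_mem measurableSet_Ioi fun t ht =>
            (norm_eq_abs _).trans_le (abs_exp_neg_mul_mul_cos_add_mul_sin_div_le M ht.le))
    _ = 2 / M := by rw [integral_const_mul, integral_Ioi_exp_neg_mul hM]; ring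

lemma abs_one_sub_two_div_pi_mul_sineIntegral_le {M : ℝ} (hM : 0 < M) :
    |1 - 2 / π * sineIntegral M| ≤ 2 / M := by
  have h : 1 - 2 / π * sineIntegral M = 2 / π * (π / 2 - sineIntegral M) := by field_simp
  rw [h, abs_mul, abs_of_pos (by positivity)]
  calc 2 / π * |π / 2 - sineIntegral M| ≤ 1 * (2 / M) :=
        mul_le_mul (div_le_one_of_le₀ (by linarith [pi_gt_three]) pi_pos.le)
          (abs_pi_div_two_sub_sineIntegral_le hM) (abs_nonneg _) zero_le_one
    _ = 2 / M := one_mul _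

lemma abs_one_sub_two_div_pi_mul_sineIntegral_le_two {M : ℝ} (hM : 0 ≤ M) :
    |1 - 2 / π * sineIntegral M| ≤ 2 := by
  rcases le_total M 1 with hM1 | hM1
  · have h : |2 / π * sineIntegral M| ≤ 1 := by
      rw [abs_mul, abs_of_pos (by positivity)]
      calc 2 / π * |sineIntegral M| ≤ 1 * 1 :=
            mul_le_mul (div_le_one_of_le₀ (by linarith [pi_gt_three]) pi_pos.le)
              ((abs_sineIntegral_le hM).trans hM1) (abs_nonneg _) zero_le_one
        _ = 1 := one_mul 1
    calc |1 - 2 / π * sineIntegral M| ≤ |1| + |2 / π * sineIntegral M| := abs_sub _ _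
      _ ≤ 2 := by rw [abs_one]; linarith
  · calc |1 - 2 / π * sineIntegral M| ≤ 2 / M :=
          abs_one_sub_two_div_pi_mul_sineIntegral_le (by linarith)
      _ ≤ 2 := div_le_self zero_le_two hM1

lemma gaussDensity_eq_gaussianPDFReal : gaussDensity = gaussianPDFReal 0 1 := by
  ext x
  simp [gaussDensity, gaussianPDFReal, div_eq_inv_mul]

lemma continuous_gaussDensity : Continuous gaussDensity := by
  unfold gaussDensity
  fun_prop

lemma gaussDensity_nonneg (x : ℝ) : 0 ≤ gaussDensity x := by
  rw [gaussDensity_eq_gaussianPDFReal]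
  exact gaussianPDFReal_nonneg 0 1 x

lemma gaussDensity_le_half (x : ℝ) : gaussDensity x ≤ 1 / 2 := by
  have h2π : 2 ≤ √(2 * π) := le_sqrt_of_sq_le (by linarith [pi_gt_three])
  have hexp : exp (-x ^ 2 / 2) ≤ 1 := exp_le_one_iff.2 (by nlinarith [sq_nonneg x])
  rw [gaussDensity, div_le_iff₀ (by positivity)]
  linarith

lemma integrable_gaussDensity : Integrable gaussDensity := by
  rw [gaussDensity_eq_gaussianPDFReal]
  exact integrable_gaussianPDFReal 0 1

lemma setIntegral_gaussDensity_le_one (s : Set ℝ) : ∫ x in s, gaussDensity x ≤ 1 := by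
  refine (setIntegral_le_integral integrable_gaussDensity
    (ae_of_all _ gaussDensity_nonneg)).trans_eq ?_
  rw [gaussDensity_eq_gaussianPDFReal]
  exact integral_gaussianPDFReal_eq_one 0 one_ne_zero

noncomputable def dirichletError (c τ x : ℝ) : ℝ := |1 - 2 / π * sineIntegral (min τ x * c)|

section DirichletError

variable {c τ : ℝ}

lemma continuous_dirichletError_mul_gaussDensity :
    Continuous fun x => dirichletError c τ x * gaussDensity x := by
  unfold dirichletError
  have := continuous_sineIntegral
  have := continuous_gaussDensity
  fun_prop

lemma dirichletError_nonneg (x : ℝ) : 0 ≤ dirichletError c τ x := abs_nonneg _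

lemma dirichletError_le_two (hc : 0 ≤ c) (hτ : 0 ≤ τ) {x : ℝ} (hx : 0 ≤ x) :
    dirichletError c τ x ≤ 2 :=
  abs_one_sub_two_div_pi_mul_sineIntegral_le_two (by positivity)

lemma dirichletError_of_le (hc : 0 < c) {x : ℝ} (hx : 0 < x) (hxτ : x ≤ τ) :
    dirichletError c τ x ≤ 2 / (x * c) := by
  rw [dirichletError, min_eq_right hxτ]
  exact abs_one_sub_two_div_pi_mul_sineIntegral_le (by positivity)

lemma dirichletError_of_ge (hc : 0 < c) (hτ : 0 < τ) {x : ℝ} (hτx : τ ≤ x) :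
    dirichletError c τ x ≤ 2 / (τ * c) := by
  rw [dirichletError, min_eq_left hτx]
  exact abs_one_sub_two_div_pi_mul_sineIntegral_le (by positivity)

lemma integrableOn_dirichletError_mul_gaussDensity (hc : 0 ≤ c) (hτ : 0 ≤ τ) :
    IntegrableOn (fun x => dirichletError c τ x * gaussDensity x) (Ioi 0) :=
  (integrable_gaussDensity.const_mul 2).integrableOn.mono'
    continuous_dirichletError_mul_gaussDensity.aestronglyMeasurable
    (ae_restrict_of_forall_mem measurableSet_Ioi fun x hx => by
      rw [norm_eq_abs,
        abs_of_nonneg (mul_nonneg (dirichletError_nonneg x) (gaussDensity_nonneg x))]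
      exact mul_le_mul_of_nonneg_right (dirichletError_le_two hc hτ (le_of_lt hx))
        (gaussDensity_nonneg x))

lemma integral_zero_inv_dirichletError_mul_gaussDensity_le (hc : 0 < c) (hτ : 0 ≤ τ) :
    ∫ x in (0 : ℝ)..c⁻¹, dirichletError c τ x * gaussDensity x ≤ c⁻¹ := by
  calc ∫ x in (0 : ℝ)..c⁻¹, dirichletError c τ x * gaussDensity x
      ≤ ∫ x in (0 : ℝ)..c⁻¹, (1 : ℝ) :=
        intervalIntegral.integral_mono_on (by positivity)
          (continuous_dirichletError_mul_gaussDensity.intervalIntegrable _ _)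
          intervalIntegrable_const fun x hx => by
            nlinarith [dirichletError_le_two hc.le hτ hx.1, gaussDensity_le_half x,
              gaussDensity_nonneg x]
    _ = c⁻¹ := by simp

lemma integral_inv_dirichletError_mul_gaussDensity_le (hc : 0 < c) (hτ : c⁻¹ ≤ τ) :
    ∫ x in c⁻¹..τ, dirichletError c τ x * gaussDensity x ≤ log (τ * c) / c := by
  have hinv : 0 < c⁻¹ := inv_pos.2 hc
  calc ∫ x in c⁻¹..τ, dirichletError c τ x * gaussDensity x
      ≤ ∫ x in c⁻¹..τ, c⁻¹ * x⁻¹ :=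
        intervalIntegral.integral_mono_on hτ
          (continuous_dirichletError_mul_gaussDensity.intervalIntegrable _ _)
          ((intervalIntegral.intervalIntegrable_inv (fun x hx => ?_) continuousOn_id).const_mul _)
          fun x hx => ?_
    _ = log (τ * c) / c := by
        rw [intervalIntegral.integral_const_mul, integral_inv_of_pos hinv (hinv.trans_le hτ),
          div_inv_eq_mul, inv_mul_eq_div]
  · rw [uIcc_of_le hτ] at hx
    exact (hinv.trans_le hx.1).ne'
  · have hx0 : 0 < x := hinv.trans_le hx.1
    calc dirichletError c τ x * gaussDensity x ≤ 2 / (x * c) * (1 / 2) :=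
          mul_le_mul (dirichletError_of_le hc hx0 hx.2) (gaussDensity_le_half x)
            (gaussDensity_nonneg x) (by positivity)
      _ = c⁻¹ * x⁻¹ := by field_simp

lemma setIntegral_Ioi_dirichletError_mul_gaussDensity_le (hc : 0 < c) (hτ : 0 < τ) :
    ∫ x in Ioi τ, dirichletError c τ x * gaussDensity x ≤ 2 / (τ * c) := by
  calc ∫ x in Ioi τ, dirichletError c τ x * gaussDensity x
      ≤ ∫ x in Ioi τ, 2 / (τ * c) * gaussDensity x :=
        setIntegral_mono_on
          ((integrableOn_dirichletError_mul_gaussDensity hc.le hτ.le).mono_set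
            (Ioi_subset_Ioi hτ.le))
          (integrable_gaussDensity.const_mul _).integrableOn measurableSet_Ioi fun x hx =>
            mul_le_mul_of_nonneg_right (dirichletError_of_ge hc hτ (le_of_lt hx))
              (gaussDensity_nonneg x)
    _ ≤ 2 / (τ * c) * 1 := by
        rw [integral_const_mul]
        gcongr
        exact setIntegral_gaussDensity_le_one _
    _ = 2 / (τ * c) := mul_one _

theorem setIntegral_Ioi_zero_dirichletError_mul_gaussDensity_le (hc : 0 < c) (hτ : c⁻¹ ≤ τ) :
    ∫ x in Ioi 0, dirichletError c τ x * gaussDensity x ≤ (1 + log (τ * c) + 2 / τ) / c := by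
  have hinv : 0 < c⁻¹ := inv_pos.2 hc
  have hτ0 : 0 < τ := hinv.trans_le hτ
  have hint := integrableOn_dirichletError_mul_gaussDensity hc.le hτ0.le
  rw [← intervalIntegral.integral_interval_add_Ioi hint (hint.mono_set (Ioi_subset_Ioi hinv.le)),
    ← intervalIntegral.integral_interval_add_Ioi (hint.mono_set (Ioi_subset_Ioi hinv.le))
      (hint.mono_set (Ioi_subset_Ioi hτ0.le))]
  calc _ ≤ c⁻¹ + (log (τ * c) / c + 2 / (τ * c)) :=
        add_le_add (integral_zero_inv_dirichletError_mul_gaussDensity_le hc hτ0.le)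
          (add_le_add (integral_inv_dirichletError_mul_gaussDensity_le hc hτ)
            (setIntegral_Ioi_dirichletError_mul_gaussDensity_le hc hτ0))
    _ = (1 + log (τ * c) + 2 / τ) / c := by field_simp; ring

end DirichletError

lemma log_hundred_mul_log_le {d : ℝ} (hd : 2 ≤ d) : log (100 * log d) ≤ 8 * log d := by
  have hlog : 0 < log d := log_pos (by linarith)
  have hd7 : 2 ^ 7 ≤ d ^ 7 := by gcongr
  have hlog_lt : log d < d := (log_le_sub_one_of_pos (by linarith)).trans_lt (by linarith)
  have h100 : 100 * log d ≤ d ^ 8 := by nlinarith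
  calc log (100 * log d) ≤ log (d ^ 8) := log_le_log (by positivity) h100
    _ = 8 * log d := by rw [log_pow]; norm_num

lemma eight_le_sqrt_hundred_mul_log {d : ℝ} (hd : 2 ≤ d) : 8 ≤ √(100 * log d) :=
  le_sqrt_of_sq_le (by linarith [log_two_gt_d9, log_le_log two_pos hd])

lemma one_add_log_mul_sqrt_add_two_div_le {d : ℝ} (hd : 2 ≤ d) :
    1 + log (√(100 * log d) * √d) + 2 / √(100 * log d) ≤ 10 * log d := by
  have hL : 0.69 < log d := by linarith [log_two_gt_d9, log_le_log two_pos hd]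
  have hτ := eight_le_sqrt_hundred_mul_log hd
  have hlog : log (√(100 * log d) * √d) = (log (100 * log d) + log d) / 2 := by
    rw [log_mul (by positivity) (by positivity), log_sqrt (by positivity), log_sqrt (by positivity)]
    ring
  have htail : 2 / √(100 * log d) ≤ 1 / 4 := by rw [div_le_iff₀ (by positivity)]; linarith
  rw [hlog]
  linarith [log_hundred_mul_log_le hd]

theorem stmt_15 :
    ∃ C : ℝ, 0 < C ∧ ∀ d : ℕ, 2 ≤ d →
      ∫ x in Set.Ioi (0 : ℝ),
          |1 - (2 / π) * ∫ t in (0 : ℝ)..(min (Real.sqrt (100 * Real.log d)) x),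
              Real.sin (t * Real.sqrt d) / t| * gaussDensity x
        ≤ C * Real.log d / Real.sqrt d := by
  refine ⟨10, by norm_num, fun d hd => ?_⟩
  have hd2 : (2 : ℝ) ≤ d := by exact_mod_cast hd
  have hc : 0 < √(d : ℝ) := sqrt_pos.2 (by linarith)
  have hτ : (√(d : ℝ))⁻¹ ≤ √(100 * log d) :=
    calc (√(d : ℝ))⁻¹ ≤ 1 := inv_le_one_of_one_le₀ (one_le_sqrt.2 (by linarith))
      _ ≤ √(100 * log d) := by linarith [eight_le_sqrt_hundred_mul_log hd2]
  simp_rw [integral_sin_mul_div_self hc.ne']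
  calc _ ≤ (1 + log (√(100 * log d) * √d) + 2 / √(100 * log d)) / √d :=
        setIntegral_Ioi_zero_dirichletError_mul_gaussDensity_le hc hτ
    _ ≤ 10 * log d / √d :=
        div_le_div_of_nonneg_right (one_add_log_mul_sqrt_add_two_div_le hd2) hc.le
end

section
/- Let u : [0, ∞) → ℝ be defined by u(t) = (e^{t²/4} − 1)/t for t > 0 and u(0) = 0. Then u is differentiable on [0, ∞) and for all t ≥ 0, max(|u(t)|, |u'(t)|) ≤ e^{t²/4}/2. -/
/-!
With `E = e^{t²/4}`, the difference quotient `s(t) = (E - 1)/t²` of `u` at `0` satisfies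
`1/4 ≤ s(t) ≤ E/4`, from `1 + x ≤ eˣ` and `eˣ - 1 ≤ x eˣ` at `x = t²/4`. Squeezing gives
`u'(0) = 1/4`, and for `t ≠ 0` the quotient rule gives `u'(t) = E/2 - s(t)`, which therefore
lies in `[E/4, E/2]`. Finally `|u(t)| = |t| s(t) ≤ |t| E/4` handles `|t| ≤ 2`, while for
`|t| ≥ 2` simply `|u(t)| = (E - 1)/|t| ≤ E/2`.
-/

open Real

/-- The function `u(t) = (e^{t²/4} − 1)/t`, extended continuously by `u(0) = 0`
(note that in Lean, division by zero yields zero, so the formula applies at `t = 0` too). -/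
noncomputable def uFn (t : ℝ) : ℝ := (Real.exp (t ^ 2 / 4) - 1) / t

open Set Filter Topology

lemma Real.exp_sub_one_le_mul_exp (x : ℝ) : exp x - 1 ≤ x * exp x := by
  have h := mul_le_mul_of_nonneg_right (one_sub_le_exp_neg x) (exp_pos x).le
  rw [← exp_add, neg_add_cancel, exp_zero, sub_mul, one_mul] at h
  linarith

lemma slope_uFn_zero (t : ℝ) : slope uFn 0 t = (exp (t ^ 2 / 4) - 1) / t ^ 2 := by
  simp only [slope_def_field, uFn, sub_zero, zero_pow two_ne_zero, zero_div, exp_zero, sub_self,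
    div_zero, div_div, sq]

lemma one_div_four_le_slope_uFn_zero {t : ℝ} (ht : t ≠ 0) : 1 / 4 ≤ slope uFn 0 t := by
  rw [slope_uFn_zero, le_div_iff₀ (by positivity)]
  linarith [add_one_le_exp (t ^ 2 / 4)]

lemma slope_uFn_zero_le {t : ℝ} (ht : t ≠ 0) : slope uFn 0 t ≤ exp (t ^ 2 / 4) / 4 := by
  rw [slope_uFn_zero, div_le_iff₀ (by positivity)]
  linarith [exp_sub_one_le_mul_exp (t ^ 2 / 4)]

lemma hasDerivAt_uFn_zero : HasDerivAt uFn (1 / 4) 0 := by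
  rw [hasDerivAt_iff_tendsto_slope]
  have hupper : Tendsto (fun t : ℝ ↦ exp (t ^ 2 / 4) / 4) (𝓝[≠] 0) (𝓝 (1 / 4)) := by
    have h : Continuous fun t : ℝ ↦ exp (t ^ 2 / 4) / 4 := by fun_prop
    simpa using (h.tendsto 0).mono_left nhdsWithin_le_nhds
  refine tendsto_of_tendsto_of_tendsto_of_le_of_le' tendsto_const_nhds hupper ?_ ?_
  all_goals filter_upwards [self_mem_nhdsWithin] with t ht
  · exact one_div_four_le_slope_uFn_zero ht
  · exact slope_uFn_zero_le ht

lemma hasDerivAt_uFn_of_ne_zero {t : ℝ} (ht : t ≠ 0) :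
    HasDerivAt uFn (exp (t ^ 2 / 4) / 2 - slope uFn 0 t) t := by
  have hsq : HasDerivAt (fun s : ℝ ↦ s ^ 2 / 4) (t / 2) t := by
    refine ((hasDerivAt_pow 2 t).div_const 4).congr_deriv ?_
    norm_num
    ring
  have hnum := ((hasDerivAt_exp _).comp t hsq).sub_const 1
  refine (hnum.div (hasDerivAt_id t) ht).congr_deriv ?_
  rw [slope_uFn_zero, Function.comp_apply, id]
  field_simp

noncomputable def uFnDeriv (t : ℝ) : ℝ :=
  if t = 0 then 1 / 4 else exp (t ^ 2 / 4) / 2 - slope uFn 0 t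

lemma hasDerivAt_uFn (t : ℝ) : HasDerivAt uFn (uFnDeriv t) t := by
  by_cases ht : t = 0
  · simpa [uFnDeriv, ht] using hasDerivAt_uFn_zero
  · simpa [uFnDeriv, ht] using hasDerivAt_uFn_of_ne_zero ht

lemma abs_uFnDeriv_le (t : ℝ) : |uFnDeriv t| ≤ exp (t ^ 2 / 4) / 2 := by
  by_cases ht : t = 0
  · rw [uFnDeriv, if_pos ht, ht]
    norm_num
  · have h₁ := one_div_four_le_slope_uFn_zero ht
    have h₂ := slope_uFn_zero_le ht
    rw [uFnDeriv, if_neg ht, abs_le]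
    constructor <;> linarith [exp_pos (t ^ 2 / 4)]

lemma abs_uFn_le (t : ℝ) : |uFn t| ≤ exp (t ^ 2 / 4) / 2 := by
  have hE : 1 ≤ exp (t ^ 2 / 4) := one_le_exp (by positivity)
  have habs : |uFn t| = (exp (t ^ 2 / 4) - 1) / |t| := by
    rw [uFn, abs_div, abs_of_nonneg (sub_nonneg.2 hE)]
  rcases le_total |t| 2 with ht | ht
  · rcases eq_or_ne t 0 with rfl | ht₀
    · simp [uFn]
    have h : |uFn t| = |t| * slope uFn 0 t := by
      rw [habs, slope_uFn_zero, ← sq_abs t]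
      field_simp
    calc |uFn t| = |t| * slope uFn 0 t := h
      _ ≤ 2 * (exp (t ^ 2 / 4) / 4) :=
        mul_le_mul ht (slope_uFn_zero_le ht₀) (by linarith [one_div_four_le_slope_uFn_zero ht₀])
          zero_le_two
      _ = exp (t ^ 2 / 4) / 2 := by ring
  · calc |uFn t| = (exp (t ^ 2 / 4) - 1) / |t| := habs
      _ ≤ (exp (t ^ 2 / 4) - 1) / 2 := div_le_div_of_nonneg_left (by linarith) two_pos ht
      _ ≤ exp (t ^ 2 / 4) / 2 := by linarith

theorem stmt_18 :
    ∃ u' : ℝ → ℝ, ∀ t : ℝ, 0 ≤ t →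
      HasDerivWithinAt uFn (u' t) (Set.Ici 0) t ∧
      max |uFn t| |u' t| ≤ Real.exp (t ^ 2 / 4) / 2 :=
  ⟨uFnDeriv, fun t _ ↦
    ⟨(hasDerivAt_uFn t).hasDerivWithinAt, max_le (abs_uFn_le t) (abs_uFnDeriv_le t)⟩⟩
end
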